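/- Let ε ∈ (−1, 0) (positive skew), σ > 0, μ ∈ ℝ, c > μ. Then the ESN activation reduction exceeds the Gaussian one: (1−ε)²·φ((c−μ)/((1−ε)σ))·σ − (1−ε)·[1 − Φ((c−μ)/((1−ε)σ))]·(c−μ) > φ((c−μ)/σ)·σ − [1 − Φ((c−μ)/σ)]·(c−μ). -/

import Mathlib

/-!
Both sides are `σ` times `∫ v in Ioi a, (v - a) * phi (v / k)` with `a = (c - μ) / σ`, at `k = 1`
and at `k = 1 - ε > 1`: an explicit antiderivative in terms of `phi` and `Phi` evaluates the
integral. Widening the Gaussian raises its density at every `v > a > 0`, so the integral is strictly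
increasing in `k`.
-/

open MeasureTheory Real Set ProbabilityTheory

noncomputable def phi (t : ℝ) : ℝ := Real.exp (-t^2/2) / Real.sqrt (2*Real.pi)
noncomputable def Phi (t : ℝ) : ℝ := ∫ u in Set.Iic t, phi u

open Filter Topology

lemma setIntegral_lt_setIntegral_of_forall_lt {X : Type*} [MeasurableSpace X] {μ : Measure X}
    {s : Set X} {f g : X → ℝ} (hs : MeasurableSet s) (hμ : μ s ≠ 0) (hf : IntegrableOn f s μ)
    (hg : IntegrableOn g s μ) (hlt : ∀ x ∈ s, f x < g x) : ∫ x in s, f x ∂μ < ∫ x in s, g x ∂μ := by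
  have hsupp : s ⊆ Function.support (g - f) ∩ s := fun x hx =>
    ⟨(sub_pos.2 (hlt x hx)).ne', hx⟩
  rw [← sub_pos, ← integral_sub hg hf]
  refine (setIntegral_pos_iff_support_of_nonneg_ae ?_ (hg.sub hf)).2
    ((pos_iff_ne_zero.2 hμ).trans_le (measure_mono hsupp))
  exact ae_restrict_of_forall_mem hs fun x hx => (sub_pos.2 (hlt x hx)).le

lemma phi_eq_gaussianPDFReal : phi = gaussianPDFReal 0 1 := by
  ext t
  simp [phi, gaussianPDFReal, div_eq_inv_mul, mul_comm]

lemma phi_pos (t : ℝ) : 0 < phi t := by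
  unfold phi; positivity

lemma integrable_phi : Integrable phi := by
  rw [phi_eq_gaussianPDFReal]; exact integrable_gaussianPDFReal 0 1

lemma integral_phi : ∫ t, phi t = 1 := by
  rw [phi_eq_gaussianPDFReal]; exact integral_gaussianPDFReal_eq_one 0 one_ne_zero

lemma continuous_phi : Continuous phi := by
  unfold phi; fun_prop

lemma hasDerivAt_phi (t : ℝ) : HasDerivAt phi (-t * phi t) t := by
  have hsq : HasDerivAt (fun s : ℝ => -s ^ 2 / 2) (-t) t := by
    refine ((hasDerivAt_pow 2 t).neg.div_const 2).congr_deriv ?_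
    push_cast; ring
  refine (hsq.exp.div_const (√(2 * π))).congr_deriv ?_
  unfold phi; ring

lemma tendsto_phi_atTop : Tendsto phi atTop (𝓝 0) := by
  have hexp : Tendsto (fun t : ℝ => -t ^ 2 / 2) atTop atBot :=
    (tendsto_neg_atBot_iff.2 (tendsto_pow_atTop two_ne_zero)).atBot_div_const two_pos
  have := (tendsto_exp_atBot.comp hexp).div_const (√(2 * π))
  rwa [zero_div] at this

lemma phi_strictAntiOn : StrictAntiOn phi (Ici 0) := by
  intro s hs t _ hst
  unfold phi
  gcongr

lemma hasDerivAt_Phi (t : ℝ) : HasDerivAt Phi (phi t) t := by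
  have hPhi : ∀ s, Phi s = Phi 0 + ∫ u in (0 : ℝ)..s, phi u := fun s => by
    rw [← intervalIntegral.integral_Iic_sub_Iic integrable_phi.integrableOn
      integrable_phi.integrableOn, Phi, Phi, add_sub_cancel]
  rw [funext hPhi]
  exact (intervalIntegral.integral_hasDerivAt_right integrable_phi.intervalIntegrable
    (continuous_phi.stronglyMeasurableAtFilter _ _) continuous_phi.continuousAt).const_add _

lemma tendsto_Phi_atTop : Tendsto Phi atTop (𝓝 1) := by
  rw [← integral_phi, ← setIntegral_univ, ← iUnion_Iic]
  exact tendsto_setIntegral_of_monotone (fun _ => measurableSet_Iic)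
    (fun _ _ => Iic_subset_Iic.2) (by rw [iUnion_Iic]; exact integrable_phi.integrableOn)

/-- `k · E[(k Z - a)⁺]` for a standard normal `Z`. -/
noncomputable def activationReduction (k a : ℝ) : ℝ :=
  k ^ 2 * phi (a / k) - k * (1 - Phi (a / k)) * a

section ActivationReduction

variable {k : ℝ} (a : ℝ)

lemma hasDerivAt_activationReductionPrimitive (hk : k ≠ 0) (v : ℝ) :
    HasDerivAt (fun v => -(k ^ 2 * phi (v / k)) - a * k * Phi (v / k))
      ((v - a) * phi (v / k)) v := by
  have hdiv : HasDerivAt (fun v : ℝ => v / k) (1 / k) v := (hasDerivAt_id v).div_const k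
  have hphi := (hasDerivAt_phi (v / k)).comp v hdiv
  have hPhi := (hasDerivAt_Phi (v / k)).comp v hdiv
  refine ((hphi.const_mul (k ^ 2)).neg.sub (hPhi.const_mul (a * k))).congr_deriv ?_
  field_simp

lemma tendsto_activationReductionPrimitive (hk : 0 < k) :
    Tendsto (fun v => -(k ^ 2 * phi (v / k)) - a * k * Phi (v / k)) atTop (𝓝 (-(a * k))) := by
  have hdiv : Tendsto (fun v : ℝ => v / k) atTop atTop := tendsto_id.atTop_div_const hk
  simpa using ((tendsto_phi_atTop.comp hdiv).const_mul (k ^ 2)).neg.sub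
    ((tendsto_Phi_atTop.comp hdiv).const_mul (a * k))

lemma sub_mul_phi_div_nonneg {v : ℝ} (hv : v ∈ Ioi a) : 0 ≤ (v - a) * phi (v / k) :=
  mul_nonneg (sub_nonneg.2 (le_of_lt hv)) (phi_pos _).le

lemma integrableOn_sub_mul_phi_div (hk : 0 < k) :
    IntegrableOn (fun v => (v - a) * phi (v / k)) (Ioi a) :=
  integrableOn_Ioi_deriv_of_nonneg' (fun v _ => hasDerivAt_activationReductionPrimitive a hk.ne' v)
    (fun _ => sub_mul_phi_div_nonneg a) (tendsto_activationReductionPrimitive a hk)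

lemma activationReduction_eq_integral (hk : 0 < k) :
    activationReduction k a = ∫ v in Ioi a, (v - a) * phi (v / k) := by
  rw [integral_Ioi_of_hasDerivAt_of_nonneg'
    (fun v _ => hasDerivAt_activationReductionPrimitive a hk.ne' v)
    (fun _ => sub_mul_phi_div_nonneg a) (tendsto_activationReductionPrimitive a hk)]
  rw [activationReduction]
  ring

end ActivationReduction

lemma activationReduction_strictMonoOn {a : ℝ} (ha : 0 < a) :
    StrictMonoOn (fun k => activationReduction k a) (Ioi 0) := by
  intro k₁ hk₁ k₂ hk₂ hk
  simp only [activationReduction_eq_integral a hk₁, activationReduction_eq_integral a hk₂]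
  refine setIntegral_lt_setIntegral_of_forall_lt measurableSet_Ioi (by simp)
    (integrableOn_sub_mul_phi_div a hk₁) (integrableOn_sub_mul_phi_div a hk₂)
    fun v (hv : a < v) => ?_
  have hv0 : 0 < v := ha.trans hv
  exact mul_lt_mul_of_pos_left (phi_strictAntiOn (div_nonneg hv0.le (le_of_lt hk₂))
    (div_nonneg hv0.le (le_of_lt hk₁)) (div_lt_div_of_pos_left hv0 hk₁ hk)) (sub_pos.2 hv)

theorem stmt16_general (μ c σ ε : ℝ) (hε2 : ε < 0) (hσ : 0 < σ) (hc : μ < c) :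
    phi ((c-μ)/σ) * σ - (1 - Phi ((c-μ)/σ)) * (c-μ)
      < (1-ε)^2 * phi ((c-μ)/((1-ε)*σ)) * σ
        - (1-ε) * (1 - Phi ((c-μ)/((1-ε)*σ))) * (c-μ) := by
  set a := (c - μ) / σ
  have ha : 0 < a := div_pos (sub_pos.2 hc) hσ
  have hred : activationReduction 1 a < activationReduction (1 - ε) a :=
    activationReduction_strictMonoOn ha (mem_Ioi.2 one_pos) (mem_Ioi.2 (by linarith))
      (by linarith)
  have hscale : (c - μ) / ((1 - ε) * σ) = a / (1 - ε) := by rw [mul_comm, ← div_div]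
  have hcμ : c - μ = a * σ := (div_mul_cancel₀ _ hσ.ne').symm
  simp only [activationReduction, div_one, one_pow, one_mul] at hred
  rw [hscale, hcμ]
  linear_combination mul_lt_mul_of_pos_right hred hσ

theorem stmt16 (μ c σ ε : ℝ) (hε1 : -1 < ε) (hε2 : ε < 0) (hσ : 0 < σ) (hc : μ < c) :
    phi ((c-μ)/σ) * σ - (1 - Phi ((c-μ)/σ)) * (c-μ)
      < (1-ε)^2 * phi ((c-μ)/((1-ε)*σ)) * σ
        - (1-ε) * (1 - Phi ((c-μ)/((1-ε)*σ))) * (c-μ) :=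
  stmt16_general μ c σ ε hε2 hσ hc
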